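/- (Tweedie's formula for the variance-preserving diffusion.) Let X₀ have density p_X on ℝ^n with finite first moment, fix ᾱ ∈ (0,1), and let X_t = √ᾱ·X₀ + √(1−ᾱ)·ε with ε ~ N(0, I) independent of X₀; denote by p_t the density of X_t. Then for every x with p_t(x) > 0, the conditional mean satisfies E[X₀ | X_t = x] = (x + (1−ᾱ)·∇_x log p_t(x)) / √ᾱ. -/

import Mathlib

/-!
Write `φ(x; m, v) = gaussPdf m v x`. Differentiating under the integral sign, which is legitimate
because `|∇ₓ φ(x; √ᾱ x₀, 1 - ᾱ) pX x₀| ≲ (1 + ‖x₀‖) |pX x₀|` locally uniformly in `x` and `pX`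
has a first moment, gives
`∇ pt x = ∫ ∇ₓ φ(x; √ᾱ x₀, 1 - ᾱ) pX x₀ = (1 - ᾱ)⁻¹ (√ᾱ ∫ x₀ φ pX - pt x • x)`,
since the Gaussian satisfies `∇ φ(x; m, v) = -v⁻¹ φ(x; m, v) (x - m)`.
Dividing by `pt x` turns the left side into `∇ log pt x` and the first integral into the
posterior mean, which is Tweedie's formula.
-/

open MeasureTheory Set Real

/-- The Gaussian density on `ℝⁿ` with mean `m` and covariance `v·I`. -/
noncomputable def gaussPdf {n : ℕ} (m : EuclideanSpace ℝ (Fin n)) (v : ℝ)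
    (x : EuclideanSpace ℝ (Fin n)) : ℝ :=
  (2 * π * v) ^ (-(n : ℝ) / 2) * Real.exp (-‖x - m‖ ^ 2 / (2 * v))

open InnerProductSpace

section Gradient

variable {F : Type*} [NormedAddCommGroup F] [InnerProductSpace ℝ F] [CompleteSpace F]
  {f : F → ℝ} {f' x : F}

theorem HasGradientAt.mul_const (hf : HasGradientAt f f' x) (c : ℝ) :
    HasGradientAt (fun y => f y * c) (c • f') x := by
  rw [hasGradientAt_iff_hasFDerivAt, map_smul]
  simpa [mul_comm] using hf.hasFDerivAt.mul_const c

theorem HasGradientAt.log (hf : HasGradientAt f f' x) (hx : f x ≠ 0) :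
    HasGradientAt (fun y => Real.log (f y)) ((f x)⁻¹ • f') x := by
  rw [hasGradientAt_iff_hasFDerivAt, map_smul]
  exact hf.hasFDerivAt.log hx

variable {α : Type*} [MeasurableSpace α] {μ : Measure α} {s : Set F} {G : F → α → ℝ}
  {G' : F → α → F} {bound : α → ℝ}

theorem hasGradientAt_integral_of_dominated_of_gradient_le (hs : s ∈ nhds x)
    (hG_meas : ∀ᶠ y in nhds x, AEStronglyMeasurable (G y) μ) (hG_int : Integrable (G x) μ)
    (hG'_meas : AEStronglyMeasurable (G' x) μ)
    (h_bound : ∀ᵐ a ∂μ, ∀ y ∈ s, ‖G' y a‖ ≤ bound a)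
    (bound_integrable : Integrable bound μ)
    (h_diff : ∀ᵐ a ∂μ, ∀ y ∈ s, HasGradientAt (G · a) (G' y a) y) :
    HasGradientAt (fun y => ∫ a, G y a ∂μ) (∫ a, G' x a ∂μ) x := by
  have hG'_int : Integrable (G' x) μ := bound_integrable.mono' hG'_meas
    (h_bound.mono fun a ha => ha x (mem_of_mem_nhds hs))
  have h := hasFDerivAt_integral_of_dominated_of_fderiv_le (F' := fun y a => toDual ℝ F (G' y a))
    hs hG_meas hG_int ((toDual ℝ F).continuous.comp_aestronglyMeasurable hG'_meas)
    (by simpa only [LinearIsometryEquiv.norm_map] using h_bound) bound_integrable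
    (by simpa only [hasGradientAt_iff_hasFDerivAt] using h_diff)
  rw [hasGradientAt_iff_hasFDerivAt]
  exact h.congr_fderiv
    ((toDual ℝ F).toContinuousLinearEquiv.toContinuousLinearMap.integral_comp_commSL
      (by simp) hG'_int)

end Gradient

section Gauss

variable {n : ℕ}

theorem norm_gaussPdf_le (m : EuclideanSpace ℝ (Fin n)) {v : ℝ} (hv : 0 < v)
    (x : EuclideanSpace ℝ (Fin n)) : ‖gaussPdf m v x‖ ≤ (2 * π * v) ^ (-(n : ℝ) / 2) := by
  rw [Real.norm_of_nonneg (by unfold gaussPdf; positivity)]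
  refine mul_le_of_le_one_right (by positivity) (Real.exp_le_one_iff.mpr ?_)
  rw [neg_div, neg_nonpos]
  positivity

@[fun_prop]
theorem continuous_gaussPdf_mean (v : ℝ) (x : EuclideanSpace ℝ (Fin n)) :
    Continuous fun m => gaussPdf m v x := by
  unfold gaussPdf
  fun_prop

theorem hasGradientAt_gaussPdf (m : EuclideanSpace ℝ (Fin n)) (v : ℝ)
    (x : EuclideanSpace ℝ (Fin n)) :
    HasGradientAt (gaussPdf m v) (-(v⁻¹ * gaussPdf m v x) • (x - m)) x := by
  have h := (((hasFDerivAt_id x).sub_const m).norm_sq.const_mul (-(2 * v)⁻¹)).exp.const_mul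
    ((2 * π * v) ^ (-(n : ℝ) / 2))
  have hpdf : gaussPdf m v = fun y => (2 * π * v) ^ (-(n : ℝ) / 2) *
      Real.exp (-(2 * v)⁻¹ * ‖y - m‖ ^ 2) := by
    funext y
    rw [gaussPdf]
    congr 2
    ring
  rw [hasGradientAt_iff_hasFDerivAt, hpdf]
  refine h.congr_fderiv ?_
  ext y
  simp only [mul_inv_rev, id_eq, neg_mul, map_sub, ContinuousLinearMap.comp_id, neg_smul,
    smul_neg, neg_apply, smul_apply, sub_apply, coe_innerSL_apply, nsmul_eq_mul, Nat.cast_ofNat,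
    smul_eq_mul, map_neg, map_smul, toDual_apply_apply, neg_inj]
  ring

variable {v : ℝ} {w : EuclideanSpace ℝ (Fin n) → ℝ}

theorem integrable_gaussPdf_mul (hv : 0 < v) (hw : Integrable w) (a : ℝ)
    (x : EuclideanSpace ℝ (Fin n)) : Integrable fun x₀ => gaussPdf (a • x₀) v x * w x₀ :=
  hw.bdd_mul ((continuous_gaussPdf_mean v x).comp (continuous_const_smul a)).aestronglyMeasurable
    (.of_forall fun _ => norm_gaussPdf_le _ hv x)

theorem integrable_gaussPdf_mul_smul (hv : 0 < v) (hw : Integrable w)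
    (hmom : Integrable fun x => ‖x‖ * w x) (a : ℝ) (x : EuclideanSpace ℝ (Fin n)) :
    Integrable fun x₀ => (gaussPdf (a • x₀) v x * w x₀) • x₀ := by
  have hw_smul : Integrable fun x₀ => w x₀ • x₀ :=
    hmom.norm.mono' (hw.aestronglyMeasurable.smul aestronglyMeasurable_id)
      (.of_forall fun x₀ => by simp [norm_smul, mul_comm])
  exact (hw_smul.bdd_smul _
    ((continuous_gaussPdf_mean v x).comp (continuous_const_smul a)).aestronglyMeasurable
    (.of_forall fun _ => norm_gaussPdf_le _ hv x)).congr (ae_of_all _ fun _ => by simp [mul_smul])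

theorem norm_gradient_gaussPdf_smul_le (hv : 0 < v) (a c : ℝ) {x y : EuclideanSpace ℝ (Fin n)}
    (hy : y ∈ Metric.ball x 1) (x₀ : EuclideanSpace ℝ (Fin n)) :
    ‖c • -(v⁻¹ * gaussPdf (a • x₀) v y) • (y - a • x₀)‖ ≤
      v⁻¹ * (2 * π * v) ^ (-(n : ℝ) / 2) * ‖c‖ * (‖x‖ + 1 + |a| * ‖x₀‖) := by
  have hy' : ‖y‖ ≤ ‖x‖ + 1 := by
    have := norm_le_norm_add_norm_sub' y x
    rw [Metric.mem_ball, dist_eq_norm] at hy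
    linarith
  have hdiff : ‖y - a • x₀‖ ≤ ‖x‖ + 1 + |a| * ‖x₀‖ := by
    grw [norm_sub_le, norm_smul, hy', Real.norm_eq_abs]
  rw [norm_smul, norm_smul, norm_neg, norm_mul, norm_inv, Real.norm_of_nonneg hv.le]
  grw [norm_gaussPdf_le _ hv, hdiff]
  exact le_of_eq (by ring)

theorem hasGradientAt_integral_gaussPdf_mul (hv : 0 < v) (hw : Integrable w)
    (hmom : Integrable fun x => ‖x‖ * w x) (a : ℝ) (x : EuclideanSpace ℝ (Fin n)) :
    HasGradientAt (fun y => ∫ x₀, gaussPdf (a • x₀) v y * w x₀)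
      (v⁻¹ • (a • (∫ x₀, (gaussPdf (a • x₀) v x * w x₀) • x₀) -
        (∫ x₀, gaussPdf (a • x₀) v x * w x₀) • x)) x := by
  have h_bound_int : Integrable fun x₀ : EuclideanSpace ℝ (Fin n) =>
      v⁻¹ * (2 * π * v) ^ (-(n : ℝ) / 2) * ((‖x‖ + 1) * ‖w x₀‖ + |a| * ‖‖x₀‖ * w x₀‖) :=
    ((hw.norm.const_mul _).add (hmom.norm.const_mul _)).const_mul _
  have h := hasGradientAt_integral_of_dominated_of_gradient_le (Metric.ball_mem_nhds x one_pos)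
    (.of_forall fun y => (integrable_gaussPdf_mul hv hw a y).aestronglyMeasurable)
    (integrable_gaussPdf_mul hv hw a x)
    (hw.aestronglyMeasurable.smul (by fun_prop : Continuous fun x₀ : EuclideanSpace ℝ (Fin n) =>
      -(v⁻¹ * gaussPdf (a • x₀) v x) • (x - a • x₀)).aestronglyMeasurable)
    (ae_of_all _ fun x₀ y hy => (norm_gradient_gaussPdf_smul_le hv a (w x₀) hy x₀).trans_eq
      (by rw [norm_mul, norm_norm]; ring))
    h_bound_int
    (ae_of_all _ fun x₀ y _ => (hasGradientAt_gaussPdf _ v y).mul_const (w x₀))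
  convert h using 1
  have h_integrand :
      (fun x₀ => w x₀ • -(v⁻¹ * gaussPdf (a • x₀) v x) • (x - a • x₀)) = fun x₀ =>
        v⁻¹ • (a • (gaussPdf (a • x₀) v x * w x₀) • x₀ - (gaussPdf (a • x₀) v x * w x₀) • x) := by
    funext x₀
    match_scalars <;> ring
  have h_first : Integrable fun x₀ => a • (gaussPdf (a • x₀) v x * w x₀) • x₀ :=
    (integrable_gaussPdf_mul_smul hv hw hmom a x).smul a
  rw [h_integrand, integral_smul,
    integral_sub h_first ((integrable_gaussPdf_mul hv hw a x).smul_const x), integral_smul,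
    integral_smul_const]

end Gauss

theorem tweedie_formula_general {n : ℕ} (pX : EuclideanSpace ℝ (Fin n) → ℝ)
    (hint : ∫ x, pX x = 1)
    (hmom : Integrable (fun x => ‖x‖ * pX x))
    (ᾱ : ℝ) (hᾱ : ᾱ ∈ Set.Ioo (0 : ℝ) 1)
    (pt : EuclideanSpace ℝ (Fin n) → ℝ)
    (hpt : ∀ x, pt x = ∫ x₀, gaussPdf (Real.sqrt ᾱ • x₀) (1 - ᾱ) x * pX x₀)
    (x : EuclideanSpace ℝ (Fin n)) (hx : 0 < pt x) :
    (pt x)⁻¹ • (∫ x₀, (gaussPdf (Real.sqrt ᾱ • x₀) (1 - ᾱ) x * pX x₀) • x₀) =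
      (Real.sqrt ᾱ)⁻¹ •
        (x + (1 - ᾱ) • gradient (fun y => Real.log (pt y)) x) := by
  have hpX : Integrable pX := .of_integral_ne_zero (by simp [hint])
  have hv : 0 < 1 - ᾱ := sub_pos.mpr hᾱ.2
  have hsqrt : Real.sqrt ᾱ ≠ 0 := (Real.sqrt_pos.mpr hᾱ.1).ne'
  have hgrad := hasGradientAt_integral_gaussPdf_mul hv hpX hmom (Real.sqrt ᾱ) x
  rw [← funext hpt, ← hpt x] at hgrad
  rw [(hgrad.log hx.ne').gradient]
  match_scalars
  · field_simp
  · field_simp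
    ring

/-- **Tweedie's formula for the variance-preserving diffusion.**
Let `X₀` have density `pX` with finite first moment, and let
`X_t = √ᾱ·X₀ + √(1−ᾱ)·ε` with `ε ~ N(0, I)` independent of `X₀`, so that the marginal
density of `X_t` is `pt x = ∫ gaussPdf (√ᾱ·x₀) (1−ᾱ) x · pX x₀ dx₀`.  Then for every `x`
with `pt x > 0`, the conditional mean satisfies
`E[X₀ | X_t = x] = (x + (1−ᾱ)·∇ log pt (x)) / √ᾱ`. -/
theorem tweedie_formula {n : ℕ} (pX : EuclideanSpace ℝ (Fin n) → ℝ)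
    (hnn : ∀ x, 0 ≤ pX x) (hint : ∫ x, pX x = 1)
    (hmom : Integrable (fun x => ‖x‖ * pX x))
    (ᾱ : ℝ) (hᾱ : ᾱ ∈ Set.Ioo (0 : ℝ) 1)
    (pt : EuclideanSpace ℝ (Fin n) → ℝ)
    (hpt : ∀ x, pt x = ∫ x₀, gaussPdf (Real.sqrt ᾱ • x₀) (1 - ᾱ) x * pX x₀)
    (x : EuclideanSpace ℝ (Fin n)) (hx : 0 < pt x) :
    (pt x)⁻¹ • (∫ x₀, (gaussPdf (Real.sqrt ᾱ • x₀) (1 - ᾱ) x * pX x₀) • x₀) =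
      (Real.sqrt ᾱ)⁻¹ •
        (x + (1 - ᾱ) • gradient (fun y => Real.log (pt y)) x) :=
  tweedie_formula_general pX hint hmom ᾱ hᾱ pt hpt x hx
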